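/- arXiv:2506.13101 — 5 statements merged into one kernel-verified Lean document; each statement's English description precedes it below -/
import Mathlib

section
/- For n ≥ 4, the quadratic form H_a(e1,e2,p1,p2) = (a1/2)⟨p1,p1⟩ + (a2/2)⟨p2,p2⟩ + a3⟨p1,e2⟩⟨p2,e1⟩ + a4⟨p1,p2⟩ restricted to the fibers of T*V_{n,2} is positive definite for every (e1,e2) ∈ V_{n,2} if and only if a1 > 0, a2 > 0, a1 + a2 > 2a3, and a1 a2 > a4². -/
open Matrix

/-! Write `x = ⟨p₁,e₂⟩ = -⟨p₂,e₁⟩` and split `p₁ = q₁ + x e₂`, `p₂ = q₂ - x e₁` with `q₁, q₂ ⟂ e₁, e₂`.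
Then `2 H_a = (a₁ + a₂ - 2a₃) x² + a₁|q₁|² + a₂|q₂|² + 2a₄⟨q₁,q₂⟩`, and the last three terms form a
positive definite form in `(q₁, q₂)` exactly when `a₁ > 0` and `a₁a₂ > a₄²`, because
`a₁ (a₁|q₁|² + a₂|q₂|² + 2a₄⟨q₁,q₂⟩) = |a₁q₁ + a₄q₂|² + (a₁a₂ - a₄²)|q₂|²`.
Conversely, the fiber points `(e₂, -e₁)` and `(s w, t w)` with `w ⟂ e₁, e₂` a unit vector force the
four inequalities. -/

section

variable {ι : Type*} [Fintype ι]

noncomputable def pairQuadForm (a1 a2 a4 : ℝ) (u v : ι → ℝ) : ℝ :=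
  a1 * (u ⬝ᵥ u) + a2 * (v ⬝ᵥ v) + 2 * a4 * (u ⬝ᵥ v)

noncomputable def hamiltonian (a1 a2 a3 a4 : ℝ) (e1 e2 p1 p2 : ι → ℝ) : ℝ :=
  a1 / 2 * (p1 ⬝ᵥ p1) + a2 / 2 * (p2 ⬝ᵥ p2) + a3 * (p1 ⬝ᵥ e2) * (p2 ⬝ᵥ e1) + a4 * (p1 ⬝ᵥ p2)

lemma mul_pairQuadForm_eq (a1 a2 a4 : ℝ) (u v : ι → ℝ) :
    a1 * pairQuadForm a1 a2 a4 u v =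
      (a1 • u + a4 • v) ⬝ᵥ (a1 • u + a4 • v) + (a1 * a2 - a4 ^ 2) * (v ⬝ᵥ v) := by
  simp only [pairQuadForm, add_dotProduct, dotProduct_add, smul_dotProduct, dotProduct_smul,
    smul_eq_mul, dotProduct_comm v u]
  ring

lemma pairQuadForm_pos {a1 a2 a4 : ℝ} (ha1 : 0 < a1) (ha4 : a4 ^ 2 < a1 * a2) {u v : ι → ℝ}
    (huv : (u, v) ≠ 0) : 0 < pairQuadForm a1 a2 a4 u v := by
  rcases eq_or_ne v 0 with rfl | hv
  · have hu : u ≠ 0 := fun hu => huv (by simp [hu])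
    have hu' : 0 < u ⬝ᵥ u := dotProduct_star_self_pos_iff.2 hu
    simpa [pairQuadForm] using mul_pos ha1 hu'
  · refine pos_of_mul_pos_right ?_ ha1.le
    rw [mul_pairQuadForm_eq]
    have hv' : 0 < v ⬝ᵥ v := dotProduct_star_self_pos_iff.2 hv
    have hw : 0 ≤ (a1 • u + a4 • v) ⬝ᵥ (a1 • u + a4 • v) := dotProduct_star_self_nonneg _
    nlinarith

lemma pairQuadForm_nonneg {a1 a2 a4 : ℝ} (ha1 : 0 < a1) (ha4 : a4 ^ 2 < a1 * a2) (u v : ι → ℝ) :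
    0 ≤ pairQuadForm a1 a2 a4 u v := by
  by_cases huv : (u, v) = 0
  · simp_all [pairQuadForm, Prod.ext_iff]
  · exact (pairQuadForm_pos ha1 ha4 huv).le

lemma pos_and_sq_lt_of_forall_binary_form_pos {a1 a2 a4 : ℝ}
    (h : ∀ s t : ℝ, (s, t) ≠ 0 → 0 < a1 * s ^ 2 + a2 * t ^ 2 + 2 * a4 * s * t) :
    0 < a1 ∧ 0 < a2 ∧ a4 ^ 2 < a1 * a2 := by
  have ha1 : 0 < a1 := by simpa using h 1 0 (by simp)
  have ha2 : 0 < a2 := by simpa using h 0 1 (by simp)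
  -- the form at `(a₄, -a₁)` equals `a₁ (a₁a₂ - a₄²)`
  have hdisc := h a4 (-a1) (by simp [ha1.ne'])
  refine ⟨ha1, ha2, ?_⟩
  nlinarith

variable {e1 e2 : ι → ℝ}

lemma hamiltonian_smul_smul (a1 a2 a3 a4 : ℝ) {w : ι → ℝ} (hw : w ⬝ᵥ w = 1) (h1w : e1 ⬝ᵥ w = 0)
    (h2w : e2 ⬝ᵥ w = 0) (s t : ℝ) :
    hamiltonian a1 a2 a3 a4 e1 e2 (s • w) (t • w) = (a1 * s ^ 2 + a2 * t ^ 2 + 2 * a4 * s * t) / 2 := by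
  simp only [hamiltonian, smul_dotProduct, dotProduct_smul, smul_eq_mul, hw,
    dotProduct_comm w e1, dotProduct_comm w e2, h1w, h2w]
  ring

variable (he1 : e1 ⬝ᵥ e1 = 1) (he2 : e2 ⬝ᵥ e2 = 1) (he12 : e1 ⬝ᵥ e2 = 0)
include he1 he2 he12

lemma hamiltonian_neg_swap (a1 a2 a3 a4 : ℝ) :
    hamiltonian a1 a2 a3 a4 e1 e2 e2 (-e1) = (a1 + a2) / 2 - a3 := by
  simp only [hamiltonian, neg_dotProduct, dotProduct_neg, he1, he2, dotProduct_comm e2 e1, he12]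
  ring

lemma two_mul_hamiltonian_eq (a1 a2 a3 a4 : ℝ) {p1 p2 : ι → ℝ} (hp1 : e1 ⬝ᵥ p1 = 0)
    (hp2 : e2 ⬝ᵥ p2 = 0) (hp12 : e1 ⬝ᵥ p2 + e2 ⬝ᵥ p1 = 0) :
    2 * hamiltonian a1 a2 a3 a4 e1 e2 p1 p2 =
      (a1 + a2 - 2 * a3) * (p1 ⬝ᵥ e2) ^ 2 +
        pairQuadForm a1 a2 a4 (p1 - (p1 ⬝ᵥ e2) • e2) (p2 + (p1 ⬝ᵥ e2) • e1) := by
  have hp21 : p2 ⬝ᵥ e1 = -(p1 ⬝ᵥ e2) := by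
    rw [dotProduct_comm p2, dotProduct_comm p1]; linarith
  rw [dotProduct_comm] at hp1
  simp only [hamiltonian, pairQuadForm, sub_dotProduct, dotProduct_sub, add_dotProduct,
    dotProduct_add, smul_dotProduct, dotProduct_smul, smul_eq_mul, dotProduct_comm e2 p1,
    dotProduct_comm e1 p2, dotProduct_comm e2 e1, hp21, hp1, hp2, he1, he2, he12]
  ring

lemma hamiltonian_pos {a1 a2 a3 a4 : ℝ} (ha1 : 0 < a1) (ha3 : 2 * a3 < a1 + a2)
    (ha4 : a4 ^ 2 < a1 * a2) {p1 p2 : ι → ℝ} (hp1 : e1 ⬝ᵥ p1 = 0) (hp2 : e2 ⬝ᵥ p2 = 0)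
    (hp12 : e1 ⬝ᵥ p2 + e2 ⬝ᵥ p1 = 0) (hp : (p1, p2) ≠ 0) :
    0 < hamiltonian a1 a2 a3 a4 e1 e2 p1 p2 := by
  have hsplit := two_mul_hamiltonian_eq he1 he2 he12 a1 a2 a3 a4 hp1 hp2 hp12
  rcases eq_or_ne (p1 ⬝ᵥ e2) 0 with hx | hx
  · simp only [hx, ne_eq, OfNat.ofNat_ne_zero, not_false_eq_true, zero_pow, mul_zero, zero_smul,
      sub_zero, add_zero, zero_add] at hsplit
    linarith [pairQuadForm_pos ha1 ha4 hp]
  · have hx2 : 0 < (a1 + a2 - 2 * a3) * (p1 ⬝ᵥ e2) ^ 2 := mul_pos (by linarith) (by positivity)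
    linarith [pairQuadForm_nonneg ha1 ha4 (p1 - (p1 ⬝ᵥ e2) • e2) (p2 + (p1 ⬝ᵥ e2) • e1)]

end

lemma exists_orthonormal_triple {n : ℕ} (hn : 3 ≤ n) :
    ∃ e1 e2 w : Fin n → ℝ, e1 ⬝ᵥ e1 = 1 ∧ e2 ⬝ᵥ e2 = 1 ∧ w ⬝ᵥ w = 1 ∧
      e1 ⬝ᵥ e2 = 0 ∧ e1 ⬝ᵥ w = 0 ∧ e2 ⬝ᵥ w = 0 :=
  ⟨Pi.single ⟨0, by omega⟩ 1, Pi.single ⟨1, by omega⟩ 1, Pi.single ⟨2, by omega⟩ 1,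
    by simp⟩

/-- (Lemma `pozitivnost`.) For `n ≥ 4`, the quadratic form
`H_a = (a₁/2)⟨p₁,p₁⟩ + (a₂/2)⟨p₂,p₂⟩ + a₃⟨p₁,e₂⟩⟨p₂,e₁⟩ + a₄⟨p₁,p₂⟩`
is positive definite on every cotangent fiber of `T*V_{n,2}` iff
`a₁ > 0`, `a₂ > 0`, `a₁ + a₂ > 2a₃` and `a₁a₂ > a₄²`. -/
theorem H_a_positive_definite_iff (n : ℕ) (hn : 4 ≤ n) (a1 a2 a3 a4 : ℝ) :
    (∀ e1 e2 : Fin n → ℝ, e1 ⬝ᵥ e1 = 1 → e2 ⬝ᵥ e2 = 1 → e1 ⬝ᵥ e2 = 0 →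
      ∀ p1 p2 : Fin n → ℝ, e1 ⬝ᵥ p1 = 0 → e2 ⬝ᵥ p2 = 0 → e1 ⬝ᵥ p2 + e2 ⬝ᵥ p1 = 0 →
        (p1, p2) ≠ 0 →
        0 < a1 / 2 * (p1 ⬝ᵥ p1) + a2 / 2 * (p2 ⬝ᵥ p2)
            + a3 * (p1 ⬝ᵥ e2) * (p2 ⬝ᵥ e1) + a4 * (p1 ⬝ᵥ p2))
    ↔ (0 < a1 ∧ 0 < a2 ∧ 2 * a3 < a1 + a2 ∧ a4 ^ 2 < a1 * a2) := by
  constructor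
  · intro h
    obtain ⟨e1, e2, w, he1, he2, hw, he12, h1w, h2w⟩ := exists_orthonormal_triple (n := n) (by omega)
    have hw0 : w ≠ 0 := by rintro rfl; simp at hw
    have hplane (s t : ℝ) (hst : (s, t) ≠ 0) : 0 < a1 * s ^ 2 + a2 * t ^ 2 + 2 * a4 * s * t := by
      have := h e1 e2 he1 he2 he12 (s • w) (t • w) (by simp [h1w]) (by simp [h2w])
        (by simp [h1w, h2w]) (by simpa [Prod.ext_iff, hw0] using hst)
      change 0 < hamiltonian a1 a2 a3 a4 e1 e2 _ _ at this
      rw [hamiltonian_smul_smul a1 a2 a3 a4 hw h1w h2w] at this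
      linarith
    obtain ⟨ha1, ha2, ha4⟩ := pos_and_sq_lt_of_forall_binary_form_pos hplane
    have hswap := h e1 e2 he1 he2 he12 e2 (-e1) he12 (by simp [dotProduct_comm e2 e1, he12])
      (by simp [he1, he2])
      (fun h0 => by simp only [Prod.ext_iff] at h0; simp [neg_eq_zero.1 h0.2] at he1)
    change 0 < hamiltonian a1 a2 a3 a4 e1 e2 _ _ at hswap
    rw [hamiltonian_neg_swap he1 he2 he12] at hswap
    exact ⟨ha1, ha2, by linarith, ha4⟩
  · rintro ⟨ha1, -, ha3, ha4⟩ e1 e2 he1 he2 he12 p1 p2 hp1 hp2 hp12 hp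
    exact hamiltonian_pos he1 he2 he12 ha1 ha3 ha4 hp1 hp2 hp12 hp
end

section
/- The magnetic momentum map Φ_η(X,P) = PXᵀ - XPᵀ + η e1∧e2 is SO(n)-equivariant: for all R ∈ SO(n), Φ_η(RX, RP) = R Φ_η(X,P) Rᵀ. -/
/-! Every term of `Φ_η(X, P)` is built from products `u vᵀ` of columns of `X` and `P`, and
`(R u)(R v)ᵀ = R (u vᵀ) Rᵀ`. -/

open Matrix

namespace Matrix

variable {l m n o α : Type*} [Fintype m]

lemma col_mul [NonUnitalNonAssocSemiring α] (A : Matrix l m α) (B : Matrix m n α) (j : n) :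
    (A * B).col j = A *ᵥ B.col j :=
  rfl

lemma vecMulVec_mulVec_mulVec [CommSemiring α] [Fintype n] (A : Matrix l m α)
    (B : Matrix o n α) (u : m → α) (v : n → α) :
    vecMulVec (A *ᵥ u) (B *ᵥ v) = A * vecMulVec u v * Bᵀ := by
  rw [mul_vecMulVec, vecMulVec_mul, vecMul_transpose]

end Matrix

theorem magnetic_momentum_map_equivariant_general (n : ℕ) (η : ℝ)
    (R : Matrix (Fin n) (Fin n) ℝ) :
    let Φ : Matrix (Fin n) (Fin 2) ℝ → Matrix (Fin n) (Fin 2) ℝ →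
        Matrix (Fin n) (Fin n) ℝ :=
      fun X P => P * Xᵀ - X * Pᵀ +
        η • (vecMulVec (fun i => X i 0) (fun i => X i 1)
              - vecMulVec (fun i => X i 1) (fun i => X i 0))
    ∀ X P : Matrix (Fin n) (Fin 2) ℝ, Φ (R * X) (R * P) = R * Φ X P * Rᵀ := by
  intro Φ X P
  simp only [Φ, ← col_apply', col_mul, vecMulVec_mulVec_mulVec, transpose_mul]
  simp only [Matrix.mul_sub, Matrix.sub_mul, Matrix.mul_add, Matrix.add_mul,
    Matrix.mul_smul, Matrix.smul_mul, Matrix.mul_assoc]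

/-- The magnetic momentum map `Φ_η(X,P) = PXᵀ - XPᵀ + η e₁∧e₂` of the left `SO(n)`-action is
equivariant: `Φ_η(RX, RP) = R Φ_η(X,P) Rᵀ` for every `R ∈ SO(n)`.
Here `e₁, e₂` are the columns of `X` and `x∧y = xyᵀ - yxᵀ`. -/
theorem magnetic_momentum_map_equivariant (n : ℕ) (η : ℝ)
    (R : Matrix (Fin n) (Fin n) ℝ) (hR : Rᵀ * R = 1) (hRdet : R.det = 1) :
    let Φ : Matrix (Fin n) (Fin 2) ℝ → Matrix (Fin n) (Fin 2) ℝ →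
        Matrix (Fin n) (Fin n) ℝ :=
      fun X P => P * Xᵀ - X * Pᵀ +
        η • (vecMulVec (fun i => X i 0) (fun i => X i 1)
              - vecMulVec (fun i => X i 1) (fun i => X i 0))
    ∀ X P : Matrix (Fin n) (Fin 2) ℝ, Φ (R * X) (R * P) = R * Φ X P * Rᵀ :=
  magnetic_momentum_map_equivariant_general n η R
end

section
/- For (e1,e2,p1,p2) ∈ T*V_{3,2} with e3 = e1×e2 and R = (e1|e2|e3) ∈ SO(3), the matrix Rᵀ(p1∧e1 + p2∧e2)R equals the skew-symmetric matrix with entries M3 = ⟨p1,e2⟩ - ⟨p2,e1⟩ in position (2,1), M1 = ⟨p2,e3⟩ in position (3,2), and M2 = -⟨p1,e3⟩ in position (1,3) (i.e., the hat matrix of M = (⟨p2,e3⟩, -⟨p1,e3⟩, ⟨p1,e2⟩-⟨p2,e1⟩)). -/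
open Matrix

/-- For `(e₁,e₂,p₁,p₂) ∈ T*V_{3,2}`, with `e₃ = e₁×e₂` and `R = (e₁|e₂|e₃) ∈ SO(3)`, the
conjugation of the space-frame momentum `Φ₀ = p₁∧e₁ + p₂∧e₂` by `Rᵀ` is the hat matrix of the
body-frame momentum `M = (⟨p₂,e₃⟩, -⟨p₁,e₃⟩, ⟨p₁,e₂⟩ - ⟨p₂,e₁⟩)`. -/
theorem body_frame_momentum (e1 e2 p1 p2 : Fin 3 → ℝ)
    (he1 : e1 ⬝ᵥ e1 = 1) (he2 : e2 ⬝ᵥ e2 = 1) (he12 : e1 ⬝ᵥ e2 = 0)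
    (hp1 : e1 ⬝ᵥ p1 = 0) (hp2 : e2 ⬝ᵥ p2 = 0) (hp12 : e1 ⬝ᵥ p2 + e2 ⬝ᵥ p1 = 0) :
    let e3 : Fin 3 → ℝ := crossProduct e1 e2
    let R : Matrix (Fin 3) (Fin 3) ℝ := Matrix.of fun i j => ![e1 i, e2 i, e3 i] j
    let W : (Fin 3 → ℝ) → (Fin 3 → ℝ) → Matrix (Fin 3) (Fin 3) ℝ :=
      fun x y => vecMulVec x y - vecMulVec y x
    let Φ₀ : Matrix (Fin 3) (Fin 3) ℝ := W p1 e1 + W p2 e2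
    let M1 : ℝ := p2 ⬝ᵥ e3
    let M2 : ℝ := -(p1 ⬝ᵥ e3)
    let M3 : ℝ := p1 ⬝ᵥ e2 - p2 ⬝ᵥ e1
    Rᵀ * Φ₀ * R = !![0, -M3, M2; M3, 0, -M1; -M2, M1, 0] := by
  intro e3 R W Φ₀ M1 M2 M3
  simp only [dotProduct, Fin.sum_univ_three] at he1 he2 he12 hp1 hp2 hp12
  ext i j
  fin_cases i <;> fin_cases j <;>
    simp [R, Φ₀, W, M1, M2, M3, e3, Matrix.mul_apply, Fin.sum_univ_three,
      vecMulVec_apply, crossProduct, dotProduct]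
  · ring1
  · linear_combination (e1 0 * e2 0 + e1 1 * e2 1 + e1 2 * e2 2) * hp1 - (e1 0 * e2 0 + e1 1 * e2 1 + e1 2 * e2 2) * hp2 - (e2 0 * p1 0 + e2 1 * p1 1 + e2 2 * p1 2) * he1 + (e1 0 * p2 0 + e1 1 * p2 1 + e1 2 * p2 2) * he2
  · linear_combination -(p1 0 * (e1 1 * e2 2 - e1 2 * e2 1) + p1 1 * (e1 2 * e2 0 - e1 0 * e2 2) + p1 2 * (e1 0 * e2 1 - e1 1 * e2 0)) * he1 - (p2 0 * (e1 1 * e2 2 - e1 2 * e2 1) + p2 1 * (e1 2 * e2 0 - e1 0 * e2 2) + p2 2 * (e1 0 * e2 1 - e1 1 * e2 0)) * he12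
  · linear_combination (e2 0 * p1 0 + e2 1 * p1 1 + e2 2 * p1 2) * he1 - (e1 0 * e2 0 + e1 1 * e2 1 + e1 2 * e2 2) * hp1 + (e1 0 * e2 0 + e1 1 * e2 1 + e1 2 * e2 2) * hp2 - (e1 0 * p2 0 + e1 1 * p2 1 + e1 2 * p2 2) * he2
  · ring1
  · linear_combination -(p1 0 * (e1 1 * e2 2 - e1 2 * e2 1) + p1 1 * (e1 2 * e2 0 - e1 0 * e2 2) + p1 2 * (e1 0 * e2 1 - e1 1 * e2 0)) * he12 - (p2 0 * (e1 1 * e2 2 - e1 2 * e2 1) + p2 1 * (e1 2 * e2 0 - e1 0 * e2 2) + p2 2 * (e1 0 * e2 1 - e1 1 * e2 0)) * he2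
  · linear_combination (p1 0 * (e1 1 * e2 2 - e1 2 * e2 1) + p1 1 * (e1 2 * e2 0 - e1 0 * e2 2) + p1 2 * (e1 0 * e2 1 - e1 1 * e2 0)) * he1 + (p2 0 * (e1 1 * e2 2 - e1 2 * e2 1) + p2 1 * (e1 2 * e2 0 - e1 0 * e2 2) + p2 2 * (e1 0 * e2 1 - e1 1 * e2 0)) * he12
  · linear_combination (p1 0 * (e1 1 * e2 2 - e1 2 * e2 1) + p1 1 * (e1 2 * e2 0 - e1 0 * e2 2) + p1 2 * (e1 0 * e2 1 - e1 1 * e2 0)) * he12 + (p2 0 * (e1 1 * e2 2 - e1 2 * e2 1) + p2 1 * (e1 2 * e2 0 - e1 0 * e2 2) + p2 2 * (e1 0 * e2 1 - e1 1 * e2 0)) * he2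
  · ring1
end

section
/- Suppose differentiable so(n)-valued functions Φ(t) and Q(t) satisfy Q̇ = [Φ, Q] and Φ̇ = [Ξ, Q] for a constant Ξ ∈ so(n). Then the complex-matrix-valued function L(λ) = λΦ + i(Q - λ²Ξ) satisfies the Lax equation d/dt L(λ) = [A(λ), L(λ)] with A(λ) = Φ - iλΞ, for every λ ∈ ℝ. -/
open Matrix Complex

private lemma lax_alg {n : ℕ} (P R X : Matrix (Fin n) (Fin n) ℂ) (lam : ℂ) :
    (P - (Complex.I * lam) • X) * (lam • P + Complex.I • (R - lam ^ 2 • X))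
      - (lam • P + Complex.I • (R - lam ^ 2 • X)) * (P - (Complex.I * lam) • X)
    = lam • (X * R - R * X) + Complex.I • (P * R - R * P) := by
  simp only [mul_sub, sub_mul, mul_add, add_mul, smul_mul_assoc, mul_smul_comm, smul_smul,
    smul_sub, smul_add]
  ring_nf
  simp [Complex.I_sq]
  module

/-- (Theorem `Gn2-klatno` (i), abstract form.) If `so(n)`-valued curves `Φ, Q` satisfy
`Q̇ = [Φ,Q]` and `Φ̇ = [Ξ,Q]` for a constant `Ξ ∈ so(n)`, then for every `λ ∈ ℝ` the
complex matrix `L(λ) = λΦ + i(Q - λ²Ξ)` satisfies the Lax equation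
`d/dt L(λ) = [A(λ), L(λ)]` with `A(λ) = Φ - iλΞ`. -/
theorem lax_pair_Gn2_pendulum (n : ℕ)
    (Φ Q : ℝ → Matrix (Fin n) (Fin n) ℝ) (Ξ : Matrix (Fin n) (Fin n) ℝ)
    (hΦskew : ∀ t, (Φ t)ᵀ = -Φ t) (hQskew : ∀ t, (Q t)ᵀ = -Q t) (hΞskew : Ξᵀ = -Ξ)
    (hQ : ∀ t i j, HasDerivAt (fun s => Q s i j) ((Φ t * Q t - Q t * Φ t) i j) t)
    (hΦ : ∀ t i j, HasDerivAt (fun s => Φ s i j) ((Ξ * Q t - Q t * Ξ) i j) t)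
    (lam : ℝ) :
    let Lm : ℝ → Matrix (Fin n) (Fin n) ℂ := fun t =>
      (lam : ℂ) • (Φ t).map Complex.ofReal
        + Complex.I • ((Q t).map Complex.ofReal - ((lam : ℂ) ^ 2) • Ξ.map Complex.ofReal)
    let Am : ℝ → Matrix (Fin n) (Fin n) ℂ := fun t =>
      (Φ t).map Complex.ofReal - (Complex.I * (lam : ℂ)) • Ξ.map Complex.ofReal
    ∀ t i j, HasDerivAt (fun s => Lm s i j) ((Am t * Lm t - Lm t * Am t) i j) t := by
  intro Lm Am t i j
  have hmat : Am t * Lm t - Lm t * Am t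
      = (lam : ℂ) • ((Ξ * Q t - Q t * Ξ).map Complex.ofReal)
        + Complex.I • ((Φ t * Q t - Q t * Φ t).map Complex.ofReal) := by
    have e1 : (Ξ * Q t - Q t * Ξ).map Complex.ofReal
        = Ξ.map Complex.ofReal * (Q t).map Complex.ofReal
          - (Q t).map Complex.ofReal * Ξ.map Complex.ofReal := by
      rw [Matrix.map_sub _ (by simp)]
      exact congrArg₂ (· - ·) (Matrix.map_mul (f := Complex.ofRealHom))
        (Matrix.map_mul (f := Complex.ofRealHom))
    have e2 : (Φ t * Q t - Q t * Φ t).map Complex.ofReal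
        = (Φ t).map Complex.ofReal * (Q t).map Complex.ofReal
          - (Q t).map Complex.ofReal * (Φ t).map Complex.ofReal := by
      rw [Matrix.map_sub _ (by simp)]
      exact congrArg₂ (· - ·) (Matrix.map_mul (f := Complex.ofRealHom))
        (Matrix.map_mul (f := Complex.ofRealHom))
    rw [e1, e2]
    exact lax_alg _ _ _ _
  have hL : (fun s => Lm s i j)
      = fun s => (lam : ℂ) * ((Φ s i j : ℝ) : ℂ)
        + Complex.I * (((Q s i j : ℝ) : ℂ) - (lam : ℂ) ^ 2 * ((Ξ i j : ℝ) : ℂ)) := by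
    funext s
    simp [Lm, Matrix.add_apply, Matrix.smul_apply, Matrix.sub_apply, Matrix.map_apply,
      smul_eq_mul]
  have hval : (Am t * Lm t - Lm t * Am t) i j
      = (lam : ℂ) * (((Ξ * Q t - Q t * Ξ) i j : ℝ) : ℂ)
        + Complex.I * (((Φ t * Q t - Q t * Φ t) i j : ℝ) : ℂ) := by
    rw [hmat]
    simp [Matrix.add_apply, Matrix.smul_apply, Matrix.map_apply, smul_eq_mul]
  rw [hL, hval]
  exact (((hΦ t i j).ofReal_comp).const_mul _).add
    ((((hQ t i j).ofReal_comp).sub_const _).const_mul _)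
end

section
/- Suppose the n×2 matrix function X(t) and the matrix functions Φ(t) ∈ so(n), Ψ̂(t) ∈ so(2) satisfy Ẋ = Φ X + X Ψ̂, Φ̇ = XΓᵀ - ΓXᵀ, and (Ψ̂)' = ΓᵀX - XᵀΓ, where Γ is a constant n×2 matrix. Then the (n+2)×(n+2) skew-symmetric matrix L(λ) with blocks L(λ) = [[-λΦ, X + λ²Γ], [-(X + λ²Γ)ᵀ, λΨ̂]] satisfies d/dt L(λ) = [L(λ), A(λ)] with A(λ) = [[-Φ, λΓ], [-λΓᵀ, Ψ̂]], for every λ ∈ ℝ. -/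
open Matrix

/-- (Theorem `Vn2-klatno`, abstract form.) If `X(t)` (an `n×2` matrix), `Φ(t) ∈ so(n)` and
`Ψ̂(t) ∈ so(2)` satisfy `Ẋ = ΦX + XΨ̂`, `Φ̇ = XΓᵀ - ΓXᵀ`, `Ψ̂' = ΓᵀX - XᵀΓ` for a constant
`n×2` matrix `Γ`, then for every `λ ∈ ℝ` the `(n+2)×(n+2)` skew-symmetric matrix
`L(λ) = [[-λΦ, X + λ²Γ], [-(X + λ²Γ)ᵀ, λΨ̂]]` satisfies `d/dt L(λ) = [L(λ), A(λ)]` with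
`A(λ) = [[-Φ, λΓ], [-λΓᵀ, Ψ̂]]`. -/
theorem lax_pair_Vn2_pendulum (n : ℕ)
    (X : ℝ → Matrix (Fin n) (Fin 2) ℝ)
    (Φ : ℝ → Matrix (Fin n) (Fin n) ℝ)
    (Ψ : ℝ → Matrix (Fin 2) (Fin 2) ℝ)
    (Γ : Matrix (Fin n) (Fin 2) ℝ)
    (hΦskew : ∀ t, (Φ t)ᵀ = -Φ t) (hΨskew : ∀ t, (Ψ t)ᵀ = -Ψ t)
    (hX : ∀ t i j, HasDerivAt (fun s => X s i j) ((Φ t * X t + X t * Ψ t) i j) t)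
    (hΦ : ∀ t i j, HasDerivAt (fun s => Φ s i j) ((X t * Γᵀ - Γ * (X t)ᵀ) i j) t)
    (hΨ : ∀ t i j, HasDerivAt (fun s => Ψ s i j) ((Γᵀ * X t - (X t)ᵀ * Γ) i j) t)
    (lam : ℝ) :
    let Lm : ℝ → Matrix (Fin n ⊕ Fin 2) (Fin n ⊕ Fin 2) ℝ := fun t =>
      Matrix.fromBlocks (-(lam • Φ t)) (X t + (lam ^ 2) • Γ)
        (-(X t + (lam ^ 2) • Γ)ᵀ) (lam • Ψ t)
    let Am : ℝ → Matrix (Fin n ⊕ Fin 2) (Fin n ⊕ Fin 2) ℝ := fun t =>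
      Matrix.fromBlocks (-(Φ t)) (lam • Γ) (-(lam • Γ)ᵀ) (Ψ t)
    ∀ t i j, HasDerivAt (fun s => Lm s i j) ((Lm t * Am t - Am t * Lm t) i j) t := by
  intro Lm Am t i j
  have key : Matrix.fromBlocks (-(lam • (X t * Γᵀ - Γ * (X t)ᵀ)))
      (Φ t * X t + X t * Ψ t)
      ((X t)ᵀ * Φ t + Ψ t * (X t)ᵀ)
      (lam • (Γᵀ * X t - (X t)ᵀ * Γ)) = Lm t * Am t - Am t * Lm t := by
    simp only [Lm, Am, Matrix.fromBlocks_multiply, sub_eq_add_neg, Matrix.fromBlocks_neg,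
      Matrix.fromBlocks_add]
    rw [Matrix.fromBlocks_inj]
    refine ⟨?_, ?_, ?_, ?_⟩ <;>
      simp only [Matrix.transpose_add, Matrix.transpose_smul, Matrix.transpose_neg,
        Matrix.transpose_transpose, hΦskew, hΨskew, Matrix.add_mul, Matrix.mul_add,
        Matrix.neg_mul, Matrix.mul_neg, Matrix.smul_mul, Matrix.mul_smul, smul_smul,
        smul_sub, smul_add, smul_neg, neg_neg] <;>
      module
  rw [← key]
  have hm : (X t)ᵀ * Φ t + Ψ t * (X t)ᵀ = -((Φ t * X t + X t * Ψ t)ᵀ) := by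
    simp only [Matrix.transpose_add, Matrix.transpose_mul, hΦskew, hΨskew, Matrix.mul_neg,
      Matrix.neg_mul, neg_add_rev, neg_neg]
    abel
  rcases i with i | i <;> rcases j with j | j <;>
    simp only [Matrix.fromBlocks_apply₁₁, Matrix.fromBlocks_apply₁₂,
      Matrix.fromBlocks_apply₂₁, Matrix.fromBlocks_apply₂₂, Lm, hm,
      Matrix.neg_apply, Matrix.smul_apply, Matrix.add_apply, Matrix.transpose_apply,
      smul_eq_mul]
  · exact ((hΦ t i j).const_mul lam).neg
  · exact (hX t i j).add_const _
  · exact ((hX t j i).add_const _).neg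
  · exact (hΨ t i j).const_mul lam
end
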